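/- Let V be a maximum edge-disjoint triangle packing of a finite simple graph G, and let t ∉ V be a doubly-attached triangle sharing an edge with exactly two members ψ₁, ψ₂ of V, where ψ₁ has type 1 and ψ₂ has type 3. Then either (i) the base edge of ψ₁ belongs to E(t), or (ii) ψ₁ has exactly one singly-attached triangle and the anchoring vertex of that triangle belongs to V(t); moreover in case (ii) the base edge of ψ₁ does not contain the common vertex of ψ₁ and ψ₂. -/
import Mathlib


open Finset

/-- The edge set of a triangle `t` (a set of vertices): all unordered pairs of
distinct vertices of `t`. -/
def triEdges {V : Type*} [DecidableEq V] (t : Finset V) : Finset (Sym2 V) :=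
  t.sym2.filter (fun e => ¬ e.IsDiag)

/-- `P` is a collection of pairwise edge-disjoint triangles of `G`. -/
def IsTrianglePacking {V : Type*} [DecidableEq V] (G : SimpleGraph V)
    (P : Finset (Finset V)) : Prop :=
  (∀ t ∈ P, G.IsNClique 3 t) ∧
    ∀ t₁ ∈ P, ∀ t₂ ∈ P, t₁ ≠ t₂ → Disjoint (triEdges t₁) (triEdges t₂)

/-- The triangle packing number `ν(G)`: the maximum number of pairwise
edge-disjoint triangles in `G`. -/
noncomputable def packingNumber {V : Type*} [DecidableEq V] (G : SimpleGraph V) : ℕ :=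
  sSup {n | ∃ P : Finset (Finset V), IsTrianglePacking G P ∧ P.card = n}

/-- `P` is a maximum edge-disjoint triangle packing of `G`. -/
def IsMaxTrianglePacking {V : Type*} [DecidableEq V] (G : SimpleGraph V)
    (P : Finset (Finset V)) : Prop :=
  IsTrianglePacking G P ∧
    ∀ Q : Finset (Finset V), IsTrianglePacking G Q → Q.card ≤ P.card

/-- `t` is a triangle of `G`, not in the packing `P`, and `ψ` is the unique
member of `P` sharing an edge with `t`. -/
def SinglyAttached {V : Type*} [DecidableEq V] (G : SimpleGraph V)
    (P : Finset (Finset V)) (t ψ : Finset V) : Prop :=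
  G.IsNClique 3 t ∧ t ∉ P ∧ ψ ∈ P ∧ (triEdges t ∩ triEdges ψ).Nonempty ∧
    ∀ ψ' ∈ P, (triEdges t ∩ triEdges ψ').Nonempty → ψ' = ψ

/-- The base edges of a solution triangle `ψ ∈ P`: the edges of `ψ` that are
shared with some triangle singly-attached to `ψ`. -/
def baseEdges {V : Type*} [DecidableEq V] (G : SimpleGraph V)
    (P : Finset (Finset V)) (ψ : Finset V) : Set (Sym2 V) :=
  {e | e ∈ triEdges ψ ∧ ∃ t, SinglyAttached G P t ψ ∧ e ∈ triEdges t}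


section Helpers
variable {V : Type*} [DecidableEq V] {G : SimpleGraph V} {P : Finset (Finset V)}

lemma mem_triEdges {t : Finset V} {a b : V} :
    s(a,b) ∈ triEdges t ↔ a ∈ t ∧ b ∈ t ∧ a ≠ b := by
  simp [triEdges, Finset.mk_mem_sym2_iff, Sym2.mk_isDiag_iff]
  tauto

lemma mem_triEdges_triple {a b c : V} {e : Sym2 V} :
    e ∈ triEdges ({a,b,c} : Finset V) ↔
      (e = s(a,b) ∧ a ≠ b) ∨ (e = s(a,c) ∧ a ≠ c) ∨ (e = s(b,c) ∧ b ≠ c) := by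
  induction e using Sym2.ind with
  | _ u v =>
    simp only [mem_triEdges, Finset.mem_insert, Finset.mem_singleton, Sym2.eq_iff]
    constructor
    · rintro ⟨(rfl|rfl|rfl), (rfl|rfl|rfl), hne⟩ <;> tauto
    · rintro (⟨(⟨rfl,rfl⟩|⟨rfl,rfl⟩),h⟩|⟨(⟨rfl,rfl⟩|⟨rfl,rfl⟩),h⟩|⟨(⟨rfl,rfl⟩|⟨rfl,rfl⟩),h⟩) <;> tauto

lemma triple_conflict {a b c a' b' c' : V}
    (h : ¬ Disjoint (triEdges ({a,b,c}:Finset V)) (triEdges ({a',b',c'}:Finset V))) :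
    s(a,b) = s(a',b') ∨ s(a,b) = s(a',c') ∨ s(a,b) = s(b',c') ∨
    s(a,c) = s(a',b') ∨ s(a,c) = s(a',c') ∨ s(a,c) = s(b',c') ∨
    s(b,c) = s(a',b') ∨ s(b,c) = s(a',c') ∨ s(b,c) = s(b',c') := by
  obtain ⟨e, he1, he2⟩ := Finset.not_disjoint_iff.mp h
  rw [mem_triEdges_triple] at he1 he2
  rcases he1 with ⟨rfl,-⟩|⟨rfl,-⟩|⟨rfl,-⟩ <;> tauto

lemma third_vertex {σ : Finset V} (h3 : σ.card = 3) {p q : V} (hp : p ∈ σ) (hq : q ∈ σ)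
    (hpq : p ≠ q) : ∃ u, u ≠ p ∧ u ≠ q ∧ σ = {p, q, u} := by
  obtain ⟨a,b,c,hab,hac,hbc,rfl⟩ := Finset.card_eq_three.mp h3
  simp only [Finset.mem_insert, Finset.mem_singleton] at hp hq
  rcases hp with rfl|rfl|rfl <;> rcases hq with rfl|rfl|rfl
  · exact absurd rfl hpq
  · exact ⟨c, hac.symm, hbc.symm, rfl⟩
  · exact ⟨b, hab.symm, hbc, by ext v; simp; tauto⟩
  · exact ⟨c, hbc.symm, hac.symm, by ext v; simp; tauto⟩
  · exact absurd rfl hpq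
  · exact ⟨a, hab, hac, by ext v; simp; tauto⟩
  · exact ⟨b, hbc, hab.symm, by ext v; simp; tauto⟩
  · exact ⟨a, hac, hab, by ext v; simp; tauto⟩
  · exact absurd rfl hpq

set_option maxHeartbeats 1000000 in
lemma two_edges {t : Finset V} (h3 : t.card = 3) {g f : Sym2 V} (hg : g ∈ triEdges t)
    (hf : f ∈ triEdges t) (hgf : g ≠ f) :
    ∃ x y z, x ≠ y ∧ x ≠ z ∧ y ≠ z ∧ t = {x,y,z} ∧ g = s(x,y) ∧ f = s(y,z) := by
  obtain ⟨a,b,c,hab,hac,hbc,rfl⟩ := Finset.card_eq_three.mp h3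
  rw [mem_triEdges_triple] at hg hf
  have e1 : ({a,b,c} : Finset V) = {b,a,c} := by ext v; simp; tauto
  have e2 : ({a,b,c} : Finset V) = {c,a,b} := by ext v; simp; tauto
  have e3 : ({a,b,c} : Finset V) = {a,c,b} := by ext v; simp; tauto
  have e4 : ({a,b,c} : Finset V) = {c,b,a} := by ext v; simp; tauto
  have e5 : ({a,b,c} : Finset V) = {b,c,a} := by ext v; simp; tauto
  rcases hg with ⟨rfl,-⟩|⟨rfl,-⟩|⟨rfl,-⟩ <;> rcases hf with ⟨hf,-⟩|⟨hf,-⟩|⟨hf,-⟩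
  · exact absurd hf.symm hgf
  · exact ⟨b,a,c, hab.symm, hbc, hac, e1, Sym2.eq_swap, hf⟩
  · exact ⟨a,b,c, hab, hac, hbc, rfl, rfl, hf⟩
  · exact ⟨c,a,b, hac.symm, hbc.symm, hab, e2, Sym2.eq_swap, hf⟩
  · exact absurd hf.symm hgf
  · exact ⟨a,c,b, hac, hab, hbc.symm, e3, rfl, hf.trans Sym2.eq_swap⟩
  · exact ⟨c,b,a, hbc.symm, hac.symm, hab.symm, e4, Sym2.eq_swap, hf.trans Sym2.eq_swap⟩
  · exact ⟨b,c,a, hbc, hab.symm, hac.symm, e5, rfl, hf.trans Sym2.eq_swap⟩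
  · exact absurd hf.symm hgf

lemma not_share_edge {σ ψ : Finset V} (hσ : SinglyAttached G P σ ψ) {ψ' : Finset V}
    (h' : ψ' ∈ P) (hne : ψ' ≠ ψ) {p q : V} (hp : p ∈ σ) (hq : q ∈ σ) (hp' : p ∈ ψ')
    (hq' : q ∈ ψ') (hpq : p ≠ q) : False := by
  refine hne (hσ.2.2.2.2 ψ' h' ⟨s(p,q), Finset.mem_inter.mpr ⟨?_, ?_⟩⟩) <;>
    exact mem_triEdges.mpr ⟨by assumption, by assumption, hpq⟩

lemma sa_disjoint {σ ψ : Finset V} (hσ : SinglyAttached G P σ ψ) {ψ' : Finset V}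
    (h' : ψ' ∈ P) (hne : ψ' ≠ ψ) : Disjoint (triEdges σ) (triEdges ψ') := by
  by_contra h
  obtain ⟨e, he1, he2⟩ := Finset.not_disjoint_iff.mp h
  exact hne (hσ.2.2.2.2 ψ' h' ⟨e, Finset.mem_inter.mpr ⟨he1, he2⟩⟩)

lemma packing_not_share (hP : IsTrianglePacking G P) {ψ ψ' : Finset V} (h : ψ ∈ P)
    (h' : ψ' ∈ P) (hne : ψ ≠ ψ') {p q : V} (hp : p ∈ ψ) (hq : q ∈ ψ) (hp' : p ∈ ψ')
    (hq' : q ∈ ψ') (hpq : p ≠ q) : False := by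
  have := hP.2 ψ h ψ' h' hne
  rw [Finset.disjoint_left] at this
  exact this (mem_triEdges.mpr ⟨hp, hq, hpq⟩) (mem_triEdges.mpr ⟨hp', hq', hpq⟩)

lemma singly_structure {σ ψ : Finset V} (hσ : SinglyAttached G P σ ψ) {p q : V}
    (hpq : s(p,q) ∈ triEdges σ) (hψ3 : ψ.card = 3) (hpψ : p ∈ ψ) (hqψ : q ∈ ψ) :
    ∃ u, u ∉ ψ ∧ σ = {p,q,u} ∧ p ≠ q := by
  rw [mem_triEdges] at hpq
  obtain ⟨hp, hq, hpq'⟩ := hpq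
  obtain ⟨u, hup, huq, hσeq⟩ := third_vertex hσ.1.2 hp hq hpq'
  refine ⟨u, fun huψ => ?_, hσeq, hpq'⟩
  have hsub : σ ⊆ ψ := by
    rw [hσeq]; intro v hv; simp at hv; rcases hv with rfl|rfl|rfl <;> assumption
  have : σ = ψ := Finset.eq_of_subset_of_card_le hsub (by rw [hψ3, hσ.1.2])
  exact hσ.2.1 (this ▸ hσ.2.2.1)

lemma exchange (hP : IsMaxTrianglePacking G P) (S T : Finset (Finset V))
    (hS : S ⊆ P) (hT1 : ∀ τ ∈ T, G.IsNClique 3 τ) (hT2 : ∀ τ ∈ T, τ ∉ P)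
    (hdisjP : ∀ τ ∈ T, ∀ ψ ∈ P, ψ ∉ S → Disjoint (triEdges τ) (triEdges ψ))
    (hTT : ∀ τ₁ ∈ T, ∀ τ₂ ∈ T, τ₁ ≠ τ₂ → Disjoint (triEdges τ₁) (triEdges τ₂))
    (hcard : S.card < T.card) : False := by
  have hQ : IsTrianglePacking G ((P \ S) ∪ T) := by
    constructor
    · intro τ hτ
      rcases Finset.mem_union.mp hτ with h | h
      · exact hP.1.1 τ (Finset.mem_sdiff.mp h).1
      · exact hT1 τ h
    · intro t₁ ht₁ t₂ ht₂ hne12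
      rcases Finset.mem_union.mp ht₁ with h1 | h1 <;> rcases Finset.mem_union.mp ht₂ with h2 | h2
      · exact hP.1.2 t₁ (Finset.mem_sdiff.mp h1).1 t₂ (Finset.mem_sdiff.mp h2).1 hne12
      · exact (hdisjP t₂ h2 t₁ (Finset.mem_sdiff.mp h1).1 (Finset.mem_sdiff.mp h1).2).symm
      · exact hdisjP t₁ h1 t₂ (Finset.mem_sdiff.mp h2).1 (Finset.mem_sdiff.mp h2).2
      · exact hTT t₁ h1 t₂ h2 hne12
  have hdisjST : Disjoint (P \ S) T :=
    Finset.disjoint_left.mpr (fun a ha haT => (hT2 a haT) (Finset.mem_sdiff.mp ha).1)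
  have hcard2 : ((P \ S) ∪ T).card = P.card - S.card + T.card := by
    rw [Finset.card_union_of_disjoint hdisjST, Finset.card_sdiff_of_subset hS]
  have hle := hP.2 _ hQ
  have hSP : S.card ≤ P.card := Finset.card_le_card hS
  omega

end Helpers

set_option maxHeartbeats 4000000 in
/-- Structure of doubly-attached triangles of type `[1,3]`. -/
theorem doubly_attached_13_structure {V : Type*} [Fintype V] [DecidableEq V]
    (G : SimpleGraph V) (P : Finset (Finset V))
    (hP : IsMaxTrianglePacking G P) (t ψ₁ ψ₂ : Finset V)
    (ht : G.IsNClique 3 t) (htP : t ∉ P)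
    (h₁ : ψ₁ ∈ P) (h₂ : ψ₂ ∈ P) (hne : ψ₁ ≠ ψ₂)
    (hs₁ : (triEdges t ∩ triEdges ψ₁).Nonempty)
    (hs₂ : (triEdges t ∩ triEdges ψ₂).Nonempty)
    (honly : ∀ ψ ∈ P, (triEdges t ∩ triEdges ψ).Nonempty → ψ = ψ₁ ∨ ψ = ψ₂)
    (hty₁ : (baseEdges G P ψ₁).ncard = 1)
    (hty₂ : (baseEdges G P ψ₂).ncard = 3) :
    (∃ e : Sym2 V, baseEdges G P ψ₁ = {e} ∧ e ∈ triEdges t) ∨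
    ((∃ ω : Finset V, SinglyAttached G P ω ψ₁ ∧
        (∀ ω' : Finset V, SinglyAttached G P ω' ψ₁ → ω' = ω) ∧ ω \ ψ₁ ⊆ t) ∧
      ∀ e ∈ baseEdges G P ψ₁, ∀ c ∈ ψ₁ ∩ ψ₂, c ∉ e) := by
  have hpack := hP.1
  have hψ₁3 : ψ₁.card = 3 := (hpack.1 ψ₁ h₁).2
  have hψ₂3 : ψ₂.card = 3 := (hpack.1 ψ₂ h₂).2
  obtain ⟨g, hg⟩ := hs₁
  rw [Finset.mem_inter] at hg
  obtain ⟨f, hf⟩ := hs₂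
  rw [Finset.mem_inter] at hf
  have hs₁' : (triEdges t ∩ triEdges ψ₁).Nonempty := ⟨g, Finset.mem_inter.mpr hg⟩
  have hs₂' : (triEdges t ∩ triEdges ψ₂).Nonempty := ⟨f, Finset.mem_inter.mpr hf⟩
  have hgf : g ≠ f := by
    rintro rfl
    exact absurd (hpack.2 ψ₁ h₁ ψ₂ h₂ hne) (Finset.not_disjoint_iff.mpr ⟨g, hg.2, hf.2⟩)
  obtain ⟨x, y, z, hxy, hxz, hyz, hteq, hgeq, hfeq⟩ := two_edges ht.2 hg.1 hf.1 hgf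
  have hxψ₁ : x ∈ ψ₁ := (mem_triEdges.mp (hgeq ▸ hg.2)).1
  have hyψ₁ : y ∈ ψ₁ := (mem_triEdges.mp (hgeq ▸ hg.2)).2.1
  obtain ⟨c, hcx, hcy, hψ₁eq⟩ := third_vertex hψ₁3 hxψ₁ hyψ₁ hxy
  have hyψ₂ : y ∈ ψ₂ := (mem_triEdges.mp (hfeq ▸ hf.2)).1
  have hzψ₂ : z ∈ ψ₂ := (mem_triEdges.mp (hfeq ▸ hf.2)).2.1
  obtain ⟨d, hdy, hdz, hψ₂eq⟩ := third_vertex hψ₂3 hyψ₂ hzψ₂ hyz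
  have hcψ₁ : c ∈ ψ₁ := by rw [hψ₁eq]; simp
  have hdψ₂ : d ∈ ψ₂ := by rw [hψ₂eq]; simp
  have hcz : c ≠ z := by
    rintro rfl
    have heq1 : t = ψ₁ := by ext v; rw [hteq, hψ₁eq] <;> simp <;> tauto
    exact htP (heq1 ▸ h₁)
  have hdx : d ≠ x := by
    rintro rfl
    have heq2 : t = ψ₂ := by ext v; rw [hteq, hψ₂eq] <;> simp <;> tauto
    exact htP (heq2 ▸ h₂)
  have hcd : c ≠ d := by
    rintro rfl
    exact packing_not_share hpack h₁ h₂ hne hyψ₁ hcψ₁ hyψ₂ hdψ₂ (Ne.symm hcy)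
  -- the unique base edge of ψ₁
  obtain ⟨e₁, hE⟩ := Set.ncard_eq_one.mp hty₁
  have he₁base : e₁ ∈ baseEdges G P ψ₁ := by rw [hE]; rfl
  obtain ⟨he₁ψ₁, ω₀, hω₀, he₁ω₀⟩ := he₁base
  have KB : ∀ ω, SinglyAttached G P ω ψ₁ → e₁ ∈ triEdges ω := by
    intro ω hω
    obtain ⟨e, he⟩ := hω.2.2.2.1
    rw [Finset.mem_inter] at he
    have hmem : e ∈ baseEdges G P ψ₁ := ⟨he.2, ω, hω, he.1⟩
    rw [hE, Set.mem_singleton_iff] at hmem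
    exact hmem ▸ he.1
  by_cases hcase : e₁ ∈ triEdges t
  · exact Or.inl ⟨e₁, hE, hcase⟩
  right
  -- all edges of ψ₂ are base edges
  have hbase2 : ∀ p q : V, p ∈ ψ₂ → q ∈ ψ₂ → p ≠ q → s(p,q) ∈ baseEdges G P ψ₂ := by
    intro p q hp hq hpq
    have hsub : baseEdges G P ψ₂ ⊆ ↑(triEdges ψ₂) := fun e he => he.1
    have hT2eq : triEdges ψ₂ = {s(y,z), s(y,d), s(z,d)} := by
      rw [hψ₂eq]; ext e; rw [mem_triEdges_triple]
      simp only [Finset.mem_insert, Finset.mem_singleton]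
      constructor
      · tauto
      · rintro (rfl | rfl | rfl)
        · exact Or.inl ⟨rfl, hyz⟩
        · exact Or.inr (Or.inl ⟨rfl, Ne.symm hdy⟩)
        · exact Or.inr (Or.inr ⟨rfl, Ne.symm hdz⟩)
    have hle : (↑(triEdges ψ₂) : Set (Sym2 V)).ncard ≤ 3 := by
      rw [Set.ncard_coe_finset, hT2eq]
      refine le_trans (Finset.card_insert_le _ _) (Nat.succ_le_succ ?_)
      refine le_trans (Finset.card_insert_le _ _) (Nat.succ_le_succ ?_)
      simp
    have heq := Set.eq_of_subset_of_ncard_le hsub (by rw [hty₂]; exact hle)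
      (Finset.finite_toSet _)
    rw [heq]
    exact Finset.mem_coe.mpr (mem_triEdges.mpr ⟨hp, hq, hpq⟩)
  obtain ⟨-, τ', hτ', hydτ'⟩ := hbase2 y d hyψ₂ hdψ₂ (Ne.symm hdy)
  obtain ⟨u', hu'ψ₂, hτ'eq, -⟩ := singly_structure hτ' hydτ' hψ₂3 hyψ₂ hdψ₂
  obtain ⟨-, τ'', hτ'', hzdτ''⟩ := hbase2 z d hzψ₂ hdψ₂ (Ne.symm hdz)
  obtain ⟨u'', hu''ψ₂, hτ''eq, -⟩ := singly_structure hτ'' hzdτ'' hψ₂3 hzψ₂ hdψ₂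
  have hyτ' : y ∈ τ' := by rw [hτ'eq]; simp
  have hdτ' : d ∈ τ' := by rw [hτ'eq]; simp
  have hu'τ' : u' ∈ τ' := by rw [hτ'eq]; simp
  have hzτ'' : z ∈ τ'' := by rw [hτ''eq]; simp
  have hdτ'' : d ∈ τ'' := by rw [hτ''eq]; simp
  have hu''τ'' : u'' ∈ τ'' := by rw [hτ''eq]; simp
  have hu'y : u' ≠ y := fun h => hu'ψ₂ (by rw [h]; exact hyψ₂)
  have hu'z : u' ≠ z := fun h => hu'ψ₂ (by rw [h]; exact hzψ₂)
  have hu'd : u' ≠ d := fun h => hu'ψ₂ (by rw [h]; exact hdψ₂)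
  have hu''y : u'' ≠ y := fun h => hu''ψ₂ (by rw [h]; exact hyψ₂)
  have hu''z : u'' ≠ z := fun h => hu''ψ₂ (by rw [h]; exact hzψ₂)
  have hu''d : u'' ≠ d := fun h => hu''ψ₂ (by rw [h]; exact hdψ₂)
  have hu'x : u' ≠ x := fun h =>
    not_share_edge hτ' h₁ hne hyτ' hu'τ' hyψ₁ (by rw [h]; exact hxψ₁) (Ne.symm hu'y)
  have hu'c : u' ≠ c := fun h =>
    not_share_edge hτ' h₁ hne hyτ' hu'τ' hyψ₁ (by rw [h]; exact hcψ₁) (Ne.symm hu'y)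
  have htτ' : t ≠ τ' := by rintro rfl; exact hne (hτ'.2.2.2.2 ψ₁ h₁ hs₁')
  have htτ'' : t ≠ τ'' := by rintro rfl; exact hne (hτ''.2.2.2.2 ψ₁ h₁ hs₁')
  have htdisj : ∀ ψ ∈ P, ψ ≠ ψ₁ → ψ ≠ ψ₂ → Disjoint (triEdges t) (triEdges ψ) := by
    intro ψ hψ hψ1 hψ2
    by_contra hnd
    obtain ⟨e, he1, he2⟩ := Finset.not_disjoint_iff.mp hnd
    rcases honly ψ hψ ⟨e, Finset.mem_inter.mpr ⟨he1, he2⟩⟩ with h | h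
    · exact hψ1 h
    · exact hψ2 h
  have hxyψ₁ : s(x,y) ∈ triEdges ψ₁ := mem_triEdges.mpr ⟨hxψ₁, hyψ₁, hxy⟩
  rw [hψ₁eq, mem_triEdges_triple] at he₁ψ₁
  rcases he₁ψ₁ with ⟨rfl, -⟩ | ⟨rfl, -⟩ | ⟨rfl, -⟩
  · -- e₁ = s(x,y) : impossible since e₁ ∉ triEdges t
    exact absurd (mem_triEdges.mpr ⟨by rw [hteq]; simp, by rw [hteq]; simp, hxy⟩) hcase
  · -- e₁ = s(x,c)
    have key : ∀ ω, SinglyAttached G P ω ψ₁ → ω = {x, c, z} := by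
      intro ω hω
      obtain ⟨w, hwψ₁, hωeq, -⟩ := singly_structure hω (KB ω hω) hψ₁3 hxψ₁ hcψ₁
      have hwx : w ≠ x := fun h => hwψ₁ (by rw [h]; exact hxψ₁)
      have hwy : w ≠ y := fun h => hwψ₁ (by rw [h]; exact hyψ₁)
      have hwc : w ≠ c := fun h => hwψ₁ (by rw [h]; exact hcψ₁)
      have htω : t ≠ ω := fun h => hne (hω.2.2.2.2 ψ₂ h₂ (h ▸ hs₂')).symm
      have hωτ' : ω ≠ τ' := by
        rintro h
        refine hne (hτ'.2.2.2.2 ψ₁ h₁ ⟨s(x,c), Finset.mem_inter.mpr ⟨?_, ?_⟩⟩)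
        · rw [← h]; exact KB ω hω
        · exact mem_triEdges.mpr ⟨hxψ₁, hcψ₁, Ne.symm hcx⟩
      have hconf : ¬Disjoint (triEdges t) (triEdges ω) ∨
          ¬Disjoint (triEdges t) (triEdges τ') ∨
          ¬Disjoint (triEdges ω) (triEdges τ') := by
        by_contra hcon
        push_neg at hcon
        obtain ⟨d1, d2, d3⟩ := hcon
        refine exchange hP {ψ₁, ψ₂} {t, ω, τ'} ?_ ?_ ?_ ?_ ?_ ?_
        · intro s hs; simp at hs; rcases hs with rfl | rfl <;> assumption
        · intro τ hτ; simp at hτ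
          rcases hτ with rfl | rfl | rfl
          exacts [ht, hω.1, hτ'.1]
        · intro τ hτ; simp at hτ
          rcases hτ with rfl | rfl | rfl
          exacts [htP, hω.2.1, hτ'.2.1]
        · intro τ hτ ψ hψ hψS
          simp at hτ hψS
          push_neg at hψS
          rcases hτ with rfl | rfl | rfl
          · exact htdisj ψ hψ hψS.1 hψS.2
          · exact sa_disjoint hω hψ hψS.1
          · exact sa_disjoint hτ' hψ hψS.2
        · intro τ₁ hτ₁ τ₂ hτ₂ hne12
          simp at hτ₁ hτ₂
          rcases hτ₁ with rfl | rfl | rfl <;> rcases hτ₂ with rfl | rfl | rfl <;>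
            first
            | exact absurd rfl hne12
            | exact d1 | exact d1.symm | exact d2 | exact d2.symm
            | exact d3 | exact d3.symm
        · have c1 : ({ψ₁, ψ₂} : Finset (Finset V)).card = 2 := by
            rw [Finset.card_insert_of_notMem (by simp [hne]), Finset.card_singleton]
          have c2 : ({t, ω, τ'} : Finset (Finset V)).card = 3 := by
            rw [Finset.card_insert_of_notMem (by simp [htω, htτ']),
              Finset.card_insert_of_notMem (by simp [hωτ']), Finset.card_singleton]
          omega
      have hwz : w = z := by
        rcases hconf with h | h | h
        · rw [hteq, hωeq] at h
          rcases triple_conflict h with h|h|h|h|h|h|h|h|h <;> rw [Sym2.eq_iff] at h <;>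
            aesop
        · rw [hteq, hτ'eq] at h
          rcases triple_conflict h with h|h|h|h|h|h|h|h|h <;> rw [Sym2.eq_iff] at h <;>
            aesop
        · rw [hωeq, hτ'eq] at h
          rcases triple_conflict h with h|h|h|h|h|h|h|h|h <;> rw [Sym2.eq_iff] at h <;>
            aesop
      rw [hωeq, hwz]
    refine ⟨⟨ω₀, hω₀, fun ω' h' => (key ω' h').trans (key ω₀ hω₀).symm, ?_⟩, ?_⟩
    · rw [key ω₀ hω₀, hψ₁eq, hteq]
      intro v hv
      simp at hv ⊢
      tauto
    · intro e he v hv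
      rw [hE, Set.mem_singleton_iff] at he
      subst he
      rw [Finset.mem_inter, hψ₁eq, hψ₂eq] at hv
      simp at hv
      have hvy : v = y := by
        rcases hv.1 with rfl | rfl | rfl
        · exfalso; rcases hv.2 with h | h | h <;> aesop
        · rfl
        · exfalso; rcases hv.2 with h | h | h <;> aesop
      subst hvy
      rw [Sym2.mem_iff]
      push_neg
      exact ⟨Ne.symm hxy, fun h => hcy h.symm⟩
  · -- e₁ = s(y,c) : derive a contradiction
    exfalso
    obtain ⟨w, hwψ₁, hω₀eq, -⟩ := singly_structure hω₀ he₁ω₀ hψ₁3 hyψ₁ hcψ₁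
    have hwx : w ≠ x := fun h => hwψ₁ (by rw [h]; exact hxψ₁)
    have hwy : w ≠ y := fun h => hwψ₁ (by rw [h]; exact hyψ₁)
    have hwc : w ≠ c := fun h => hwψ₁ (by rw [h]; exact hcψ₁)
    have hyω₀ : y ∈ ω₀ := by rw [hω₀eq]; simp
    have hcω₀ : c ∈ ω₀ := by rw [hω₀eq]; simp
    have hwω₀ : w ∈ ω₀ := by rw [hω₀eq]; simp
    have hwz : w ≠ z := fun h =>
      not_share_edge hω₀ h₂ (Ne.symm hne) hyω₀ hwω₀ hyψ₂ (by rw [h]; exact hzψ₂)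
        (Ne.symm hwy)
    have hwd : w ≠ d := fun h =>
      not_share_edge hω₀ h₂ (Ne.symm hne) hyω₀ hwω₀ hyψ₂ (by rw [h]; exact hdψ₂)
        (Ne.symm hwy)
    have htω₀ : t ≠ ω₀ := fun h => hne (hω₀.2.2.2.2 ψ₂ h₂ (h ▸ hs₂')).symm
    have hω₀τ'' : ω₀ ≠ τ'' := by
      rintro h
      refine hne (hτ''.2.2.2.2 ψ₁ h₁ ⟨s(y,c), Finset.mem_inter.mpr ⟨?_, ?_⟩⟩)
      · rw [← h]; exact he₁ω₀
      · exact mem_triEdges.mpr ⟨hyψ₁, hcψ₁, Ne.symm hcy⟩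
    have hconf : ¬Disjoint (triEdges t) (triEdges ω₀) ∨
        ¬Disjoint (triEdges t) (triEdges τ'') ∨
        ¬Disjoint (triEdges ω₀) (triEdges τ'') := by
      by_contra hcon
      push_neg at hcon
      obtain ⟨d1, d2, d3⟩ := hcon
      refine exchange hP {ψ₁, ψ₂} {t, ω₀, τ''} ?_ ?_ ?_ ?_ ?_ ?_
      · intro s hs; simp at hs; rcases hs with rfl | rfl <;> assumption
      · intro τ hτ; simp at hτ
        rcases hτ with rfl | rfl | rfl
        exacts [ht, hω₀.1, hτ''.1]
      · intro τ hτ; simp at hτ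
        rcases hτ with rfl | rfl | rfl
        exacts [htP, hω₀.2.1, hτ''.2.1]
      · intro τ hτ ψ hψ hψS
        simp at hτ hψS
        push_neg at hψS
        rcases hτ with rfl | rfl | rfl
        · exact htdisj ψ hψ hψS.1 hψS.2
        · exact sa_disjoint hω₀ hψ hψS.1
        · exact sa_disjoint hτ'' hψ hψS.2
      · intro τ₁ hτ₁ τ₂ hτ₂ hne12
        simp at hτ₁ hτ₂
        rcases hτ₁ with rfl | rfl | rfl <;> rcases hτ₂ with rfl | rfl | rfl <;>
          first
          | exact absurd rfl hne12
          | exact d1 | exact d1.symm | exact d2 | exact d2.symm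
          | exact d3 | exact d3.symm
      · have c1 : ({ψ₁, ψ₂} : Finset (Finset V)).card = 2 := by
          rw [Finset.card_insert_of_notMem (by simp [hne]), Finset.card_singleton]
        have c2 : ({t, ω₀, τ''} : Finset (Finset V)).card = 3 := by
          rw [Finset.card_insert_of_notMem (by simp [htω₀, htτ'']),
            Finset.card_insert_of_notMem (by simp [hω₀τ'']), Finset.card_singleton]
        omega
    have hu''x : u'' = x := by
      rcases hconf with h | h | h
      · rw [hteq, hω₀eq] at h
        rcases triple_conflict h with h|h|h|h|h|h|h|h|h <;> rw [Sym2.eq_iff] at h <;>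
          aesop
      · rw [hteq, hτ''eq] at h
        rcases triple_conflict h with h|h|h|h|h|h|h|h|h <;> rw [Sym2.eq_iff] at h <;>
          aesop
      · rw [hω₀eq, hτ''eq] at h
        rcases triple_conflict h with h|h|h|h|h|h|h|h|h <;> rw [Sym2.eq_iff] at h <;>
          aesop
    -- now swap ψ₂ for the two triangles τ', τ''
    have hττ : τ' ≠ τ'' := by
      rintro h
      have : y ∈ τ'' := by rw [← h]; exact hyτ'
      rw [hτ''eq] at this
      simp at this
      rcases this with h' | h' | h'
      exacts [hyz h', hdy h'.symm, hu''y h'.symm]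
    have hdisjττ : Disjoint (triEdges τ') (triEdges τ'') := by
      by_contra hnd
      rw [hτ'eq, hτ''eq] at hnd
      rcases triple_conflict hnd with h|h|h|h|h|h|h|h|h <;> rw [Sym2.eq_iff] at h <;>
        aesop
    refine exchange hP {ψ₂} {τ', τ''} ?_ ?_ ?_ ?_ ?_ ?_
    · intro s hs; simp at hs; subst hs; exact h₂
    · intro τ hτ; simp at hτ
      rcases hτ with rfl | rfl
      exacts [hτ'.1, hτ''.1]
    · intro τ hτ; simp at hτ
      rcases hτ with rfl | rfl
      exacts [hτ'.2.1, hτ''.2.1]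
    · intro τ hτ ψ hψ hψS
      simp at hτ hψS
      rcases hτ with rfl | rfl
      · exact sa_disjoint hτ' hψ hψS
      · exact sa_disjoint hτ'' hψ hψS
    · intro τ₁ hτ₁ τ₂ hτ₂ hne12
      simp at hτ₁ hτ₂
      rcases hτ₁ with rfl | rfl <;> rcases hτ₂ with rfl | rfl <;>
        first
        | exact absurd rfl hne12
        | exact hdisjττ | exact hdisjττ.symm
    · have c2 : ({τ', τ''} : Finset (Finset V)).card = 2 := by
        rw [Finset.card_insert_of_notMem (by simp [hττ]), Finset.card_singleton]
      simp [c2]
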